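/- arXiv:2307.07704 — 2 statements merged into one kernel-verified Lean document; each statement's English description precedes it below -/
import Mathlib

section
/- Let Υ = {y_0,…,y_{M−1}} be M nonzero vectors in ℝ^D, let ŷ = y/‖y‖₂, let Z be a random k×D matrix, let η ∈ (0,1) with ηM a positive integer, and let ε̃₊, ε̃₋ > 0. Order the values ‖Zŷ‖₂² as ‖Zŷ_{(0)}‖₂² ≤ … ≤ ‖Zŷ_{(M−1)}‖₂², and set p₊(Υ) = P{‖Zŷ_{((1−η)M)}‖₂² > (1+ε̃₊)k} and p₋(Υ) = P{‖Zŷ_{(ηM−1)}‖₂² < (1−ε̃₋)k}. Then p₊(Υ) ≤ max over ηM-element subsets Υ(η) ⊆ Υ of the minimum over diagonal matrices Λ_{Υ(η)} with strictly positive diagonal entries of C(M, ηM)·P{‖Z·Υ(η)·Λ_{Υ(η)}‖_F² > (1+ε̃₊)·k·‖Υ(η)·Λ_{Υ(η)}‖_F²}, and likewise p₋(Υ) ≤ max over ηM-element subsets Υ(η) of the minimum over such Λ_{Υ(η)} of C(M, ηM)·P{‖Z·Υ(η)·Λ_{Υ(η)}‖_F² < (1−ε̃₋)·k·‖Υ(η)·Λ_{Υ(η)}‖_F²}.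 Here a subset Υ(η) is identified with the D×(ηM) matrix whose columns are its elements, ‖·‖_F is the Frobenius norm, and C(M, ηM) is the binomial coefficient. -/
open MeasureTheory ProbabilityTheory

noncomputable section

/-- Squared Euclidean norm of a vector. -/
def sqNorm {ι : Type*} [Fintype ι] (x : ι → ℝ) : ℝ := ∑ i, (x i) ^ 2

/-- Euclidean norm of a vector. -/
def eNorm {ι : Type*} [Fintype ι] (x : ι → ℝ) : ℝ := Real.sqrt (sqNorm x)

/-- Unit normalization of a vector (junk value `0` when `x = 0`). -/
def unit {ι : Type*} [Fintype ι] (x : ι → ℝ) : ι → ℝ := (eNorm x)⁻¹ • x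

/-- Squared Frobenius norm of a matrix. -/
def frobSq {α β : Type*} [Fintype α] [Fintype β] (A : Matrix α β ℝ) : ℝ :=
  ∑ i, ∑ j, (A i j) ^ 2

/-- The ℓ²→ℓ² operator norm of a matrix. -/
def opNorm {α β : Type*} [Fintype α] [Fintype β] (A : Matrix α β ℝ) : ℝ :=
  sSup {c : ℝ | ∃ x : β → ℝ, eNorm x ≤ 1 ∧ c = eNorm (A.mulVec x)}

/-- The ∞-stable rank `‖A‖_F² / ‖A‖²`. -/
def rInf {α β : Type*} [Fintype α] [Fintype β] (A : Matrix α β ℝ) : ℝ :=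
  frobSq A / (opNorm A) ^ 2

/-- The 4-stable rank `‖A‖_F⁴ / ‖AAᵀ‖_F²`. -/
def r4 {α β : Type*} [Fintype α] [Fintype β] (A : Matrix α β ℝ) : ℝ :=
  (frobSq A) ^ 2 / frobSq (A * A.transpose)

/-- The sub-gaussian (ψ₂) norm of a real random variable. -/
def psi2 {Ω : Type*} [MeasurableSpace Ω] (μ : Measure Ω) (f : Ω → ℝ) : ℝ :=
  sInf {t : ℝ | 0 < t ∧ ∫ ω, Real.exp (f ω ^ 2 / t ^ 2) ∂μ ≤ 2}

/-- The entries of the random matrix `Z` are i.i.d. -/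
def IIDEntries {Ω : Type*} [MeasurableSpace Ω] (μ : Measure Ω) {k D : ℕ}
    (Z : Ω → Matrix (Fin k) (Fin D) ℝ) : Prop :=
  (∀ p : Fin k × Fin D, Measurable fun ω => Z ω p.1 p.2) ∧
  iIndepFun (fun (p : Fin k × Fin D) ω => Z ω p.1 p.2) μ ∧
  ∀ p q : Fin k × Fin D,
    IdentDistrib (fun ω => Z ω p.1 p.2) (fun ω => Z ω q.1 q.2) μ μ

/-- The entries of the random matrix `Z` are i.i.d., mean-zero, unit-variance
and sub-gaussian. -/
def GoodEntries {Ω : Type*} [MeasurableSpace Ω] (μ : Measure Ω) {k D : ℕ}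
    (Z : Ω → Matrix (Fin k) (Fin D) ℝ) : Prop :=
  IIDEntries μ Z ∧
  (∀ i j, ∫ ω, Z ω i j ∂μ = 0) ∧
  (∀ i j, ∫ ω, (Z ω i j) ^ 2 ∂μ = 1) ∧
  (∀ i j, ∃ t : ℝ, 0 < t ∧ ∫ ω, Real.exp ((Z ω i j) ^ 2 / t ^ 2) ∂μ ≤ 2)

/-- The two-sided Johnson–Lindenstrauss inequality for the pair `u, v`,
with tolerance `ε` and normalization `√(γ/k)`. -/
def JLPair {k D : ℕ} (ε γ : ℝ) (Z : Matrix (Fin k) (Fin D) ℝ) (u v : Fin D → ℝ) : Prop :=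
  (1 - ε) * eNorm (u - v) ≤ Real.sqrt (γ / k) * eNorm (Z.mulVec (u - v)) ∧
  Real.sqrt (γ / k) * eNorm (Z.mulVec (u - v)) ≤ (1 + ε) * eNorm (u - v)

/-! If the `(M - m)`-th smallest of the values `‖Z ŷᵢ‖²` exceeds `t`, so do the `m` values from
it upwards. The event therefore lies in the union, over the `C(M, m)` sets of `m` indices, of the
events that every value indexed by the set exceeds `t`, and its probability is at most `C(M, m)`
times that of the likeliest of them. For a fixed set and positive weights `λ`, `‖Z Υ Λ‖_F²` is the
combination of the `‖Z ŷᵢ‖²` with positive coefficients `λᵢ² ‖yᵢ‖²`, which sum to `‖Υ Λ‖_F²`; so on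
that event it exceeds `t ‖Υ Λ‖_F²`, whatever `λ` is. The lower tail is symmetric. -/

section Norms

variable {ι : Type*} [Fintype ι]

lemma sqNorm_nonneg (x : ι → ℝ) : 0 ≤ sqNorm x :=
  Finset.sum_nonneg fun _ _ => sq_nonneg _

lemma eNorm_sq (x : ι → ℝ) : eNorm x ^ 2 = sqNorm x :=
  Real.sq_sqrt (sqNorm_nonneg x)

lemma eNorm_pos {x : ι → ℝ} (hx : x ≠ 0) : 0 < eNorm x := by
  obtain ⟨i, hi⟩ := Function.ne_iff.1 hx
  exact Real.sqrt_pos.2 <|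
    Finset.sum_pos' (fun _ _ => sq_nonneg _) ⟨i, Finset.mem_univ i, pow_two_pos_of_ne_zero hi⟩

lemma eNorm_smul_unit {x : ι → ℝ} (hx : x ≠ 0) : eNorm x • unit x = x := by
  rw [unit, smul_smul, mul_inv_cancel₀ (eNorm_pos hx).ne', one_smul]

lemma sqNorm_smul (c : ℝ) (x : ι → ℝ) : sqNorm (c • x) = c ^ 2 * sqNorm x := by
  simp only [sqNorm, Pi.smul_apply, smul_eq_mul, mul_pow, Finset.mul_sum]

lemma sqNorm_mulVec_eq_mul_unit {κ : Type*} [Fintype κ] (A : Matrix κ ι ℝ) {x : ι → ℝ}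
    (hx : x ≠ 0) : sqNorm (A.mulVec x) = eNorm x ^ 2 * sqNorm (A.mulVec (unit x)) := by
  conv_lhs => rw [← eNorm_smul_unit hx]
  rw [Matrix.mulVec_smul, sqNorm_smul]

end Norms

section Frobenius

variable {κ δ ι : Type*} [Fintype κ] [Fintype δ] [Fintype ι]

lemma frobSq_of_smul_cols (c : ι → ℝ) (v : ι → δ → ℝ) :
    frobSq (Matrix.of fun d i => c i * v i d) = ∑ i, c i ^ 2 * sqNorm (v i) := by
  rw [frobSq, Finset.sum_comm]
  simp only [Matrix.of_apply, mul_pow, ← Finset.mul_sum, sqNorm]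

omit [Fintype κ] [Fintype ι] in
lemma mul_of_smul_cols (Z : Matrix κ δ ℝ) (c : ι → ℝ) (v : ι → δ → ℝ) :
    Z * Matrix.of (fun d i => c i * v i d) = Matrix.of fun r i => c i * Z.mulVec (v i) r := by
  ext r i
  simp only [Matrix.mul_apply, Matrix.of_apply, Matrix.mulVec, dotProduct, Finset.mul_sum]
  exact Finset.sum_congr rfl fun _ _ => by ring

lemma frobSq_mul_of_smul_cols (Z : Matrix κ δ ℝ) (c : ι → ℝ) {v : ι → δ → ℝ}
    (hv : ∀ i, v i ≠ 0) :
    frobSq (Z * Matrix.of fun d i => c i * v i d)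
      = ∑ i, (c i ^ 2 * eNorm (v i) ^ 2) * sqNorm (Z.mulVec (unit (v i))) := by
  rw [mul_of_smul_cols, frobSq_of_smul_cols]
  exact Finset.sum_congr rfl fun i _ => by rw [sqNorm_mulVec_eq_mul_unit Z (hv i), mul_assoc]

variable [Nonempty ι] (Z : Matrix κ δ ℝ) {c : ι → ℝ} {v : ι → δ → ℝ} {t : ℝ}

lemma lt_frobSq_mul_of_smul_cols (hc : ∀ i, 0 < c i) (hv : ∀ i, v i ≠ 0)
    (ht : ∀ i, t < sqNorm (Z.mulVec (unit (v i)))) :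
    t * frobSq (Matrix.of fun d i => c i * v i d)
      < frobSq (Z * Matrix.of fun d i => c i * v i d) := by
  rw [frobSq_mul_of_smul_cols Z c hv, frobSq_of_smul_cols, Finset.mul_sum]
  refine Finset.sum_lt_sum_of_nonempty Finset.univ_nonempty fun i _ => ?_
  rw [← eNorm_sq (v i), mul_comm t]
  exact mul_lt_mul_of_pos_left (ht i) (by have := eNorm_pos (hv i); have := hc i; positivity)

lemma frobSq_mul_lt_of_smul_cols (hc : ∀ i, 0 < c i) (hv : ∀ i, v i ≠ 0)
    (ht : ∀ i, sqNorm (Z.mulVec (unit (v i))) < t) :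
    frobSq (Z * Matrix.of fun d i => c i * v i d)
      < t * frobSq (Matrix.of fun d i => c i * v i d) := by
  rw [frobSq_mul_of_smul_cols Z c hv, frobSq_of_smul_cols, Finset.mul_sum]
  refine Finset.sum_lt_sum_of_nonempty Finset.univ_nonempty fun i _ => ?_
  rw [← eNorm_sq (v i), mul_comm t]
  exact mul_lt_mul_of_pos_left (ht i) (by have := eNorm_pos (hv i); have := hc i; positivity)

end Frobenius

section OrderStatistics

variable {α : Type*} [LinearOrder α] {n : ℕ} (f : Fin n → α) (j : Fin n) {t : α}

lemma exists_card_eq_forall_lt_of_lt_sort (h : t < f (Tuple.sort f j)) :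
    ∃ s : Finset (Fin n), s.card = n - j ∧ ∀ i ∈ s, t < f i := by
  refine ⟨(Finset.Ici j).map (Tuple.sort f).toEmbedding, by simp, ?_⟩
  simp only [Finset.mem_map, Finset.mem_Ici, Equiv.coe_toEmbedding]
  rintro _ ⟨i, hji, rfl⟩
  exact h.trans_le (Tuple.monotone_sort f hji)

lemma exists_card_eq_forall_lt_of_sort_lt (h : f (Tuple.sort f j) < t) :
    ∃ s : Finset (Fin n), s.card = j + 1 ∧ ∀ i ∈ s, f i < t := by
  refine ⟨(Finset.Iic j).map (Tuple.sort f).toEmbedding, by simp, ?_⟩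
  simp only [Finset.mem_map, Finset.mem_Iic, Equiv.coe_toEmbedding]
  rintro _ ⟨i, hij, rfl⟩
  exact (Tuple.monotone_sort f hij).trans_lt h

end OrderStatistics

section UnionBound

variable {Ω : Type*} [MeasurableSpace Ω] (μ : Measure Ω) {M m : ℕ}

lemma exists_measure_le_choose_mul (hmM : m ≤ M) (P : Ω → Fin M → Prop) :
    ∃ g : Fin m ↪ Fin M, μ {ω | ∃ s : Finset (Fin M), s.card = m ∧ ∀ i ∈ s, P ω i}
      ≤ M.choose m * μ {ω | ∀ i, P ω (g i)} := by
  classical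
  set S := (Finset.univ : Finset (Fin M)).powersetCard m
  set F : Finset (Fin M) → Set Ω := fun s => {ω | ∀ i ∈ s, P ω i}
  have hS : S.Nonempty := Finset.powersetCard_nonempty.2 (by simpa using hmM)
  obtain ⟨s, hs, hmax⟩ := S.exists_max_image (fun s => μ (F s)) hS
  have hcard : s.card = m := (Finset.mem_powersetCard.1 hs).2
  refine ⟨(s.orderEmbOfFin hcard).toEmbedding, ?_⟩
  have hcover : {ω | ∃ s : Finset (Fin M), s.card = m ∧ ∀ i ∈ s, P ω i} ⊆ ⋃ s ∈ S, F s := by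
    rintro ω ⟨s, hs, hP⟩
    exact Set.mem_biUnion (Finset.mem_powersetCard_univ.2 hs) hP
  have hFs : F s ⊆ {ω | ∀ i, P ω (s.orderEmbOfFin hcard i)} :=
    fun ω hω i => hω _ (s.orderEmbOfFin_mem hcard i)
  calc _ ≤ ∑ s ∈ S, μ (F s) := (measure_mono hcover).trans (measure_biUnion_finset_le S F)
    _ ≤ S.card • μ (F s) := Finset.sum_le_card_nsmul S _ _ hmax
    _ ≤ _ := by
      rw [Finset.card_powersetCard, Finset.card_univ, Fintype.card_fin, nsmul_eq_mul]
      exact mul_le_mul_right (measure_mono hFs) _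

lemma toReal_measure_le_iSup_iInf [IsFiniteMeasure μ] (hmM : m ≤ M) (P : Ω → Fin M → Prop)
    {Λ : Type*} [Nonempty Λ] (Q : (Fin m ↪ Fin M) → Λ → Set Ω)
    (hPQ : ∀ g l, {ω | ∀ i, P ω (g i)} ⊆ Q g l) {E : Set Ω}
    (hE : ∀ ω ∈ E, ∃ s : Finset (Fin M), s.card = m ∧ ∀ i ∈ s, P ω i) :
    (μ E).toReal ≤ ⨆ g, ⨅ l, (M.choose m : ℝ) * (μ (Q g l)).toReal := by
  obtain ⟨g, hg⟩ := exists_measure_le_choose_mul μ hmM P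
  refine le_trans ?_ (le_ciSup (Set.finite_range _).bddAbove g)
  refine le_ciInf fun l => ?_
  have := (measure_mono hE).trans (hg.trans (mul_le_mul_right (measure_mono (hPQ g l)) _))
  simpa using ENNReal.toReal_mono (by finiteness) this

end UnionBound

theorem order_statistics_via_frobenius
    {Ω : Type*} [MeasurableSpace Ω] (μ : Measure Ω) [IsProbabilityMeasure μ]
    {D M k : ℕ} (y : Fin M → Fin D → ℝ) (hy : ∀ i, y i ≠ 0)
    (Z : Ω → Matrix (Fin k) (Fin D) ℝ)
    (epP epM : ℝ)
    (m : ℕ) (hm0 : 0 < m) (hmM : m < M) :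
    ((μ {ω | (1 + epP) * k <
          (fun i => sqNorm ((Z ω).mulVec (unit (y i))))
            (Tuple.sort (fun i => sqNorm ((Z ω).mulVec (unit (y i)))) ⟨M - m, by omega⟩)}).toReal ≤
        ⨆ g : Fin m ↪ Fin M, ⨅ lam : {v : Fin m → ℝ // ∀ i, 0 < v i},
          (M.choose m : ℝ) *
            (μ {ω | (1 + epP) * k *
                  frobSq (Matrix.of fun (d : Fin D) (i : Fin m) => lam.val i * y (g i) d) <
                frobSq (Z ω * Matrix.of fun (d : Fin D) (i : Fin m) =>
                  lam.val i * y (g i) d)}).toReal) ∧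
    ((μ {ω | (fun i => sqNorm ((Z ω).mulVec (unit (y i))))
            (Tuple.sort (fun i => sqNorm ((Z ω).mulVec (unit (y i)))) ⟨m - 1, by omega⟩) <
          (1 - epM) * k}).toReal ≤
        ⨆ g : Fin m ↪ Fin M, ⨅ lam : {v : Fin m → ℝ // ∀ i, 0 < v i},
          (M.choose m : ℝ) *
            (μ {ω | frobSq (Z ω * Matrix.of fun (d : Fin D) (i : Fin m) =>
                  lam.val i * y (g i) d) <
                (1 - epM) * k *
                  frobSq (Matrix.of fun (d : Fin D) (i : Fin m) => lam.val i * y (g i) d)}).toReal) := by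
  have : Nonempty (Fin m) := ⟨⟨0, hm0⟩⟩
  have : Nonempty {v : Fin m → ℝ // ∀ i, 0 < v i} := ⟨⟨fun _ => 1, fun _ => one_pos⟩⟩
  constructor
  · refine toReal_measure_le_iSup_iInf μ hmM.le
      (fun ω i => (1 + epP) * k < sqNorm ((Z ω).mulVec (unit (y i)))) _
      (fun g lam ω hω => lt_frobSq_mul_of_smul_cols (Z ω) lam.2 (fun i => hy (g i)) hω)
      fun ω hω => ?_
    simpa [Nat.sub_sub_self hmM.le] using
      exists_card_eq_forall_lt_of_lt_sort (fun i => sqNorm ((Z ω).mulVec (unit (y i)))) _ hω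
  · refine toReal_measure_le_iSup_iInf μ hmM.le
      (fun ω i => sqNorm ((Z ω).mulVec (unit (y i))) < (1 - epM) * k) _
      (fun g lam ω hω => frobSq_mul_lt_of_smul_cols (Z ω) lam.2 (fun i => hy (g i)) hω)
      fun ω hω => ?_
    simpa [Nat.sub_add_cancel hm0] using
      exists_card_eq_forall_lt_of_sort_lt (fun i => sqNorm ((Z ω).mulVec (unit (y i)))) _ hω
end
end

section
/- (Walecki construction.) For every N, the edge set of the complete graph K_N on N vertices admits a partition into (N−1)/2 Hamiltonian cycles (cycles of length N) when N is odd, and into (N−2)/2 Hamiltonian cycles together with one perfect matching (a 1-factor, i.e. a spanning 1-regular subgraph) when N is even. -/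
/-!
Put the vertices of `K_{m+1}` at a point `∞` and at `ZMod m`. The `j`-th Walecki cycle runs
`∞, j, j - 1, j + 1, j - 2, j + 2, …, ∞`, a translate of the zigzag `0, -1, 1, -2, 2, …`, which
enumerates `ZMod m`. Two consecutive zigzag terms sum to `-1` or `0`, and conversely every pair
`{x, y}` with `x ≠ y` and `x + y ∈ {-1, 0}` occurs consecutively in the zigzag. So the edges
`{a, b}` of cycle `j` inside `ZMod m` are exactly those with `a + b + 1 ∈ {2j, 2j + 1}`, and its
two spokes join `∞` to `j` and to `j + ⌊m/2⌋`. For `j < ⌊m/2⌋` these classes are disjoint and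
exhaust all edges, except, when `m` is odd, the perfect matching formed by `{∞, -1}` and the
pairs with `a + b = -2`. Relabelling the vertices by `Fin (m + 1)` gives the theorem.
-/

namespace Nat

theorem mod_eq_or_mod_add_eq_of_lt_two_mul {p n : ℕ} (h : p < 2 * n) :
    p % n = p ∨ p % n + n = p := by
  rcases lt_or_ge p n with hp | hp
  · exact Or.inl (Nat.mod_eq_of_lt hp)
  · rw [Nat.mod_eq_sub_mod hp, Nat.mod_eq_of_lt (by omega)]
    omega

end Nat

namespace ZMod

theorem val_add_add_one_eq_or {m : ℕ} [NeZero m] (x y : ZMod m) :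
    (x + y + 1).val = x.val + y.val + 1 ∨ (x + y + 1).val + m = x.val + y.val + 1 := by
  have hx := x.val_lt
  have hy := y.val_lt
  have h : x + y + 1 = ((x.val + y.val + 1 : ℕ) : ZMod m) := by simp
  rw [h, ZMod.val_natCast]
  exact Nat.mod_eq_or_mod_add_eq_of_lt_two_mul (by omega)

end ZMod

namespace SimpleGraph

variable {α β ι : Type*}

def topWalk (f : ℕ → α) : (n : ℕ) → (∀ t < n, f t ≠ f (t + 1)) →
    (⊤ : SimpleGraph α).Walk (f 0) (f n)
  | 0, _ => .nil
  | n + 1, hf =>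
    (topWalk f n fun t ht => hf t (by omega)).concat ((top_adj _ _).mpr (hf n (by omega)))

theorem support_topWalk (f : ℕ → α) (n : ℕ) (hf : ∀ t < n, f t ≠ f (t + 1)) :
    (topWalk f n hf).support = (List.range (n + 1)).map f := by
  induction n with
  | zero => rfl
  | succ n ih => simp [topWalk, Walk.support_concat, ih, List.range_succ]

theorem edges_topWalk (f : ℕ → α) (n : ℕ) (hf : ∀ t < n, f t ≠ f (t + 1)) :
    (topWalk f n hf).edges = (List.range n).map fun t => s(f t, f (t + 1)) := by
  induction n with
  | zero => rfl
  | succ n ih => simp [topWalk, Walk.edges_concat, ih, List.range_succ]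

variable {G : SimpleGraph α} {H : SimpleGraph β}

structure IsHamiltonianDecomposition [DecidableEq α] (c : ι → Σ a : α, G.Walk a a)
    (E : Set (Sym2 α)) : Prop where
  isHamiltonianCycle : ∀ i, (c i).2.IsHamiltonianCycle
  pairwiseDisjoint : (Set.univ : Set ι).PairwiseDisjoint fun i => (c i).2.edgeSet
  disjoint : ∀ i, Disjoint (c i).2.edgeSet E
  iUnion_union : (⋃ i, (c i).2.edgeSet) ∪ E = G.edgeSet

theorem Iso.image_edgeSet (φ : G ≃g H) : Sym2.map φ.toHom '' G.edgeSet = H.edgeSet := by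
  rw [← Subgraph.edgeSet_top, ← Subgraph.edgeSet_map, Subgraph.map_iso_top, Subgraph.edgeSet_top]

theorem IsHamiltonianDecomposition.map [DecidableEq α] [DecidableEq β]
    {c : ι → Σ a : α, G.Walk a a} {E : Set (Sym2 α)} (φ : G ≃g H)
    (h : IsHamiltonianDecomposition c E) :
    IsHamiltonianDecomposition (fun i => ⟨φ (c i).1, (c i).2.map φ.toHom⟩)
      (Sym2.map φ.toHom '' E) := by
  have hinj : Function.Injective (Sym2.map φ.toHom) := Sym2.map.injective φ.injective
  refine ⟨fun i => (h.isHamiltonianCycle i).map φ.bijective, fun i hi j hj hij => ?_,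
    fun i => ?_, ?_⟩
  · simpa only [Function.onFun, Walk.edgeSet_map, Set.disjoint_image_iff hinj]
      using h.pairwiseDisjoint hi hj hij
  · simpa only [Walk.edgeSet_map, Set.disjoint_image_iff hinj] using h.disjoint i
  · simp only [Walk.edgeSet_map]
    rw [← Set.image_iUnion, ← Set.image_union, h.iUnion_union, φ.image_edgeSet]

theorem Subgraph.IsPerfectMatching.map_iso {M : G.Subgraph} (φ : G ≃g H)
    (hM : M.IsPerfectMatching) : (M.map φ.toHom).IsPerfectMatching :=
  ⟨hM.1.map φ.toHom φ.injective, fun v => ⟨φ.symm v, hM.2 _, φ.apply_symm_apply v⟩⟩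

end SimpleGraph

namespace Walecki

open SimpleGraph

section Zigzag

variable (m : ℕ)

/-- The zigzag `0, -1, 1, -2, 2, …` in `ZMod m`, through its representatives
`0, m - 1, 1, m - 2, 2, …`. -/
def zigzag (t : ℕ) : ZMod m := ((if t % 2 = 0 then t / 2 else m - 1 - t / 2 : ℕ) : ZMod m)

variable {m}

theorem zigzag_val {t : ℕ} (ht : t < m) :
    (zigzag m t).val = if t % 2 = 0 then t / 2 else m - 1 - t / 2 :=
  ZMod.val_cast_of_lt (by split_ifs <;> omega)

@[simp]
theorem zigzag_zero : zigzag m 0 = 0 := by simp [zigzag]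

theorem zigzag_pred : zigzag m (m - 1) = (m / 2 : ℕ) := by
  unfold zigzag
  congr 1
  split_ifs <;> omega

theorem zigzag_add_zigzag_succ_add_one {t : ℕ} (ht : t + 1 < m) :
    zigzag m t + zigzag m (t + 1) + 1 = if t % 2 = 0 then 0 else 1 := by
  have hsum : (if t % 2 = 0 then t / 2 else m - 1 - t / 2) +
      (if (t + 1) % 2 = 0 then (t + 1) / 2 else m - 1 - (t + 1) / 2) + 1 =
      m + if t % 2 = 0 then 0 else 1 := by
    split_ifs <;> omega
  unfold zigzag
  rw [← Nat.cast_add, ← Nat.cast_add_one, hsum]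
  split_ifs <;> simp

theorem zigzag_injOn : Set.InjOn (zigzag m) (Set.Iio m) := by
  intro t (ht : t < m) t' (ht' : t' < m) h
  have := congrArg ZMod.val h
  rw [zigzag_val ht, zigzag_val ht'] at this
  split_ifs at this <;> omega

variable [NeZero m]

theorem exists_zigzag_eq (x : ZMod m) : ∃ t < m, zigzag m t = x := by
  have hx := x.val_lt
  by_cases h : 2 * x.val < m
  · exact ⟨2 * x.val, h,
      ZMod.val_injective m (by rw [zigzag_val h]; split_ifs <;> omega)⟩
  · exact ⟨2 * (m - 1 - x.val) + 1, by omega,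
      ZMod.val_injective m (by rw [zigzag_val (by omega)]; split_ifs <;> omega)⟩

theorem exists_zigzag_pair {x y : ZMod m} (hxy : x ≠ y)
    (hsum : x.val + y.val + 1 = m ∨ x.val + y.val = m) :
    ∃ t, t + 1 < m ∧ s(zigzag m t, zigzag m (t + 1)) = s(x, y) := by
  wlog hlt : x.val < y.val generalizing x y
  · have hne : x.val ≠ y.val := fun h => hxy (ZMod.val_injective m h)
    obtain ⟨t, ht, he⟩ := this hxy.symm (by omega) (by omega)
    exact ⟨t, ht, he.trans Sym2.eq_swap⟩
  have hy := y.val_lt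
  rcases hsum with hsum | hsum
  · refine ⟨2 * x.val, by omega, ?_⟩
    have h0 : zigzag m (2 * x.val) = x :=
      ZMod.val_injective m (by rw [zigzag_val (by omega)]; split_ifs <;> omega)
    have h1 : zigzag m (2 * x.val + 1) = y :=
      ZMod.val_injective m (by rw [zigzag_val (by omega)]; split_ifs <;> omega)
    rw [h0, h1]
  · refine ⟨2 * x.val - 1, by omega, ?_⟩
    have h0 : zigzag m (2 * x.val - 1) = y :=
      ZMod.val_injective m (by rw [zigzag_val (by omega)]; split_ifs <;> omega)
    have h1 : zigzag m (2 * x.val - 1 + 1) = x :=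
      ZMod.val_injective m (by rw [zigzag_val (by omega)]; split_ifs <;> omega)
    rw [h0, h1, Sym2.eq_swap]

end Zigzag

section Cycle

variable (m : ℕ)

def waleckiPath (j : ZMod m) :
    (⊤ : SimpleGraph (Option (ZMod m))).Walk (some (j + zigzag m 0)) none :=
  (topWalk (fun t => some (j + zigzag m t)) (m - 1) fun t ht h =>
      absurd (zigzag_injOn (Set.mem_Iio.mpr (by omega)) (Set.mem_Iio.mpr (by omega))
        (add_left_cancel (Option.some_injective _ h))) (by omega)).concat (by simp)

def waleckiCycle (j : ZMod m) : (⊤ : SimpleGraph (Option (ZMod m))).Walk none none :=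
  .cons (by simp) (waleckiPath m j)

variable {m}

theorem edges_waleckiCycle (j : ZMod m) :
    (waleckiCycle m j).edges = s(none, some j) :: ((List.range (m - 1)).map
      (fun t => s(some (j + zigzag m t), some (j + zigzag m (t + 1))))).concat
      s(some (j + zigzag m (m - 1)), none) := by
  simp [waleckiCycle, waleckiPath, Walk.edges_concat, edges_topWalk]

variable [NeZero m]

theorem support_waleckiPath (j : ZMod m) :
    (waleckiPath m j).support =
      (List.range m).map (fun t => some (j + zigzag m t)) ++ [none] := by
  simp [waleckiPath, Walk.support_concat, support_topWalk, Nat.sub_add_cancel NeZero.one_le]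

theorem waleckiPath_isPath (j : ZMod m) : (waleckiPath m j).IsPath := by
  rw [Walk.isPath_def, support_waleckiPath, List.nodup_append]
  refine ⟨List.Nodup.map_on (fun t ht t' ht' h => ?_) List.nodup_range,
    List.nodup_singleton _, by simp⟩
  exact zigzag_injOn (List.mem_range.mp ht) (List.mem_range.mp ht')
    (add_left_cancel (Option.some_injective _ h))

theorem mem_support_waleckiPath (j : ZMod m) (v : Option (ZMod m)) :
    v ∈ (waleckiPath m j).support := by
  rw [support_waleckiPath]
  rcases v with _ | x
  · simp
  · obtain ⟨t, ht, hx⟩ := exists_zigzag_eq (x - j)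
    exact List.mem_append_left _
      (List.mem_map.mpr ⟨t, List.mem_range.mpr ht, by rw [hx, add_sub_cancel]⟩)

theorem waleckiCycle_isHamiltonianCycle (hm : 2 ≤ m) (j : ZMod m) :
    (waleckiCycle m j).IsHamiltonianCycle := by
  have hp := waleckiPath_isPath j
  rw [Walk.isHamiltonianCycle_isCycle_and_isHamiltonian_tail,
    Walk.isCycle_iff_isPath_tail_and_le_length]
  simp only [waleckiCycle, Walk.tail_cons, Walk.length_cons]
  refine ⟨⟨(Walk.isPath_copy _ _ _).mpr hp, ?_⟩, fun v => ?_⟩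
  · have := congrArg List.length (support_waleckiPath j)
    simp only [Walk.length_support, List.length_append, List.length_map, List.length_range,
      List.length_singleton, add_left_inj] at this
    omega
  · simpa using hp.isHamiltonian_of_mem (mem_support_waleckiPath j) v

end Cycle

section Label

variable (m : ℕ)

def waleckiLabelPair : Option (ZMod m) → Option (ZMod m) → ℕ
  | some a, some b => (a + b + 1).val / 2
  | some a, none | none, some a => if a.val < m / 2 then a.val else a.val - m / 2
  | none, none => 0

/-- The index of the Walecki cycle through an edge: cycle `j` contains `{a, b}` iff
`a + b + 1 ∈ {2j, 2j + 1}`, and `{∞, a}` iff `a ∈ {j, j + ⌊m/2⌋}`. The value `⌊m/2⌋` is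
taken only for odd `m`, on the edges of the leftover perfect matching. -/
def waleckiLabel : Sym2 (Option (ZMod m)) → ℕ :=
  Sym2.lift ⟨waleckiLabelPair m, by
    rintro (_ | a) (_ | b) <;> simp only [waleckiLabelPair, add_comm]⟩

variable {m}

@[simp]
theorem waleckiLabel_mk (u v : Option (ZMod m)) :
    waleckiLabel m s(u, v) = waleckiLabelPair m u v := rfl

theorem waleckiLabel_of_mem_edges {j : ℕ} (hj : j < m / 2) {e : Sym2 (Option (ZMod m))}
    (he : e ∈ (waleckiCycle m j).edges) : waleckiLabel m e = j := by
  have hjm : (j : ZMod m).val = j := ZMod.val_cast_of_lt (by omega)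
  rw [edges_waleckiCycle, List.mem_cons, List.concat_eq_append, List.mem_append,
    List.mem_singleton, List.mem_map] at he
  rcases he with rfl | ⟨t, ht, rfl⟩ | rfl
  · simp [waleckiLabelPair, hjm, hj]
  · rw [List.mem_range] at ht
    have hsum : (j : ZMod m) + zigzag m t + (j + zigzag m (t + 1)) + 1 =
        ((2 * j + if t % 2 = 0 then 0 else 1 : ℕ) : ZMod m) := by
      have := zigzag_add_zigzag_succ_add_one (m := m) (by omega : t + 1 < m)
      split_ifs at this ⊢ <;> push_cast <;> linear_combination this
    simp only [waleckiLabel_mk, waleckiLabelPair, hsum]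
    rw [ZMod.val_cast_of_lt (by split_ifs <;> omega)]
    split_ifs <;> omega
  · rw [zigzag_pred, ← Nat.cast_add]
    simp only [waleckiLabel_mk, waleckiLabelPair]
    rw [ZMod.val_cast_of_lt (by omega)]
    split_ifs <;> omega

variable [NeZero m]

theorem waleckiLabel_le (e : Sym2 (Option (ZMod m))) : waleckiLabel m e ≤ (m - 1) / 2 := by
  induction e using Sym2.ind with
  | _ u v =>
    rcases u with _ | a <;> rcases v with _ | b <;>
      simp only [waleckiLabel_mk, waleckiLabelPair]
    · omega
    · have := b.val_lt
      split_ifs <;> omega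
    · have := a.val_lt
      split_ifs <;> omega
    · have := (a + b + 1).val_lt
      omega

theorem eq_or_eq_of_waleckiLabelPair_none_some {j : ℕ} {a : ZMod m}
    (h : waleckiLabelPair m none (some a) = j) : a = j ∨ a = j + zigzag m (m - 1) := by
  have := a.val_lt
  rw [zigzag_pred, ← Nat.cast_add, ← ZMod.natCast_zmod_val a]
  simp only [waleckiLabelPair] at h
  split_ifs at h
  · exact Or.inl (congrArg _ h)
  · exact Or.inr (congrArg _ (by omega))

theorem exists_zigzag_pair_of_waleckiLabelPair_some_some {j : ℕ} (hj : j < m / 2)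
    {a b : ZMod m} (hab : a ≠ b) (hl : waleckiLabelPair m (some a) (some b) = j) :
    ∃ t, t + 1 < m ∧ s(j + zigzag m t, j + zigzag m (t + 1)) = s(a, b) := by
  simp only [waleckiLabelPair] at hl
  have hxy : a - (j : ZMod m) ≠ b - j := fun h => hab (sub_left_inj.mp h)
  -- `a + b + 1 - 2j ∈ {0, 1}` pins down the sum of the representatives of `a - j`, `b - j`
  have hsum : (a - (j : ZMod m)).val + (b - (j : ZMod m)).val + 1 = m ∨
      (a - (j : ZMod m)).val + (b - (j : ZMod m)).val = m := by
    have hr : a - (j : ZMod m) + (b - j) + 1 = (((a + b + 1).val - 2 * j : ℕ) : ZMod m) := by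
      rw [Nat.cast_sub (by omega), ZMod.natCast_zmod_val]
      push_cast
      ring
    have hrv := ZMod.val_cast_of_lt (n := m) (a := (a + b + 1).val - 2 * j) (by omega)
    rw [← hr] at hrv
    have hne : (a - (j : ZMod m)).val ≠ (b - (j : ZMod m)).val :=
      fun h => hxy (ZMod.val_injective m h)
    rcases ZMod.val_add_add_one_eq_or (a - (j : ZMod m)) (b - j) with h | h <;> omega
  obtain ⟨t, ht, hpair⟩ := exists_zigzag_pair hxy hsum
  exact ⟨t, ht, by simpa using congrArg (Sym2.map ((j : ZMod m) + ·)) hpair⟩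

theorem mem_edges_of_waleckiLabel {j : ℕ} (hj : j < m / 2) {e : Sym2 (Option (ZMod m))}
    (he : ¬ e.IsDiag) (hl : waleckiLabel m e = j) : e ∈ (waleckiCycle m j).edges := by
  induction e using Sym2.ind with
  | _ u v =>
    rw [Sym2.mk_isDiag_iff] at he
    rw [waleckiLabel_mk] at hl
    rw [edges_waleckiCycle, List.mem_cons, List.concat_eq_append, List.mem_append,
      List.mem_singleton, List.mem_map]
    rcases u with _ | a <;> rcases v with _ | b
    · exact absurd rfl he
    · rcases eq_or_eq_of_waleckiLabelPair_none_some hl with rfl | rfl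
      · exact Or.inl rfl
      · exact Or.inr (Or.inr Sym2.eq_swap)
    · rcases eq_or_eq_of_waleckiLabelPair_none_some hl with rfl | rfl
      · exact Or.inl Sym2.eq_swap
      · exact Or.inr (Or.inr rfl)
    · obtain ⟨t, ht, hpair⟩ :=
        exists_zigzag_pair_of_waleckiLabelPair_some_some hj (fun h => he (by rw [h])) hl
      refine Or.inr (Or.inl ⟨t, List.mem_range.mpr (by omega), ?_⟩)
      simpa using congrArg (Sym2.map some) hpair

theorem edgeSet_waleckiCycle {j : ℕ} (hj : j < m / 2) :
    (waleckiCycle m j).edgeSet = {e | waleckiLabel m e = j} \ Sym2.diagSet := by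
  ext e
  refine ⟨fun he => ⟨waleckiLabel_of_mem_edges hj he, ?_⟩,
    fun he => mem_edges_of_waleckiLabel hj he.2 he.1⟩
  simpa using Walk.edges_subset_edgeSet _ he

end Label

section Matching

variable (m : ℕ)

def waleckiMatching : (⊤ : SimpleGraph (Option (ZMod m))).Subgraph :=
  toSubgraph (fromEdgeSet {e | waleckiLabel m e = m / 2}) le_top

variable {m}

theorem waleckiMatching_adj (v w : Option (ZMod m)) :
    (waleckiMatching m).Adj v w ↔ waleckiLabelPair m v w = m / 2 ∧ v ≠ w := by
  simp [waleckiMatching]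

theorem edgeSet_waleckiMatching :
    (waleckiMatching m).edgeSet = {e | waleckiLabel m e = m / 2} \ Sym2.diagSet := by
  rw [← edgeSet_fromEdgeSet]
  ext e
  induction e using Sym2.ind with
  | _ u v => rfl

variable [NeZero m]

theorem edgeSet_waleckiMatching_eq_empty (hm : Even m) : (waleckiMatching m).edgeSet = ∅ := by
  rw [edgeSet_waleckiMatching, Set.eq_empty_iff_forall_notMem]
  rintro e ⟨he, -⟩
  have := waleckiLabel_le e
  have := NeZero.ne m
  obtain ⟨k, rfl⟩ := hm
  simp only [Set.mem_ofPred_eq] at he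
  omega

theorem waleckiLabelPair_none_some_eq_half_iff (hm : Odd m) (b : ZMod m) :
    waleckiLabelPair m none (some b) = m / 2 ↔ b.val = m - 1 := by
  rw [Nat.odd_iff] at hm
  have := b.val_lt
  simp only [waleckiLabelPair]
  split_ifs <;> omega

theorem waleckiLabelPair_some_some_eq_half_iff (hm : Odd m) {a b : ZMod m} (hab : a ≠ b) :
    waleckiLabelPair m (some a) (some b) = m / 2 ↔ a.val + b.val + 2 = m := by
  rw [Nat.odd_iff] at hm
  have hne : a.val ≠ b.val := fun h => hab (ZMod.val_injective m h)
  have := (a + b + 1).val_lt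
  have := a.val_lt
  have := b.val_lt
  simp only [waleckiLabelPair]
  rcases ZMod.val_add_add_one_eq_or a b with h | h <;> omega

theorem waleckiMatching_isPerfectMatching (hm : Odd m) :
    (waleckiMatching m).IsPerfectMatching := by
  have hodd := Nat.odd_iff.mp hm
  rw [Subgraph.isPerfectMatching_iff]
  simp only [waleckiMatching_adj]
  rintro (_ | a)
  · have hw : ((m - 1 : ℕ) : ZMod m).val = m - 1 := ZMod.val_cast_of_lt (by omega)
    refine ⟨some ((m - 1 : ℕ) : ZMod m),
      ⟨(waleckiLabelPair_none_some_eq_half_iff hm _).mpr hw, by simp⟩, ?_⟩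
    rintro (_ | b) ⟨hl, hne⟩
    · exact absurd rfl hne
    · exact congrArg some (ZMod.val_injective m
        (((waleckiLabelPair_none_some_eq_half_iff hm b).mp hl).trans hw.symm))
  have ha := a.val_lt
  by_cases ham : a.val = m - 1
  · refine ⟨none, ⟨(waleckiLabelPair_none_some_eq_half_iff hm a).mpr ham, by simp⟩, ?_⟩
    rintro (_ | b) ⟨hl, hne⟩
    · rfl
    · have := (waleckiLabelPair_some_some_eq_half_iff hm (hne ∘ congrArg some)).mp hl
      omega
  · have hw : ((m - 2 - a.val : ℕ) : ZMod m).val = m - 2 - a.val :=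
      ZMod.val_cast_of_lt (by omega)
    have haw : a ≠ ((m - 2 - a.val : ℕ) : ZMod m) := fun h => by
      rw [← h] at hw
      omega
    refine ⟨some ((m - 2 - a.val : ℕ) : ZMod m),
      ⟨(waleckiLabelPair_some_some_eq_half_iff hm haw).mpr (by omega), by simpa using haw⟩, ?_⟩
    rintro (_ | b) ⟨hl, hne⟩
    · exact absurd ((waleckiLabelPair_none_some_eq_half_iff hm a).mp hl) ham
    · have := (waleckiLabelPair_some_some_eq_half_iff hm (hne ∘ congrArg some)).mp hl
      exact congrArg some (ZMod.val_injective m (by omega))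

end Matching

variable {m : ℕ} [NeZero m]

theorem isHamiltonianDecomposition_walecki :
    IsHamiltonianDecomposition (fun j : Fin (m / 2) => ⟨none, waleckiCycle m (j : ℕ)⟩)
      (waleckiMatching m).edgeSet where
  isHamiltonianCycle j := waleckiCycle_isHamiltonianCycle (by have := j.2; omega) _
  pairwiseDisjoint i _ j _ hij := by
    simp only [Function.onFun, edgeSet_waleckiCycle i.2, edgeSet_waleckiCycle j.2]
    exact Set.disjoint_left.mpr fun e hi hj => hij (Fin.ext (hi.1.symm.trans hj.1))
  disjoint j := by
    rw [edgeSet_waleckiCycle j.2, edgeSet_waleckiMatching]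
    exact Set.disjoint_left.mpr fun e hj he => j.2.ne (hj.1.symm.trans he.1)
  iUnion_union := by
    ext e
    simp only [Set.mem_union, Set.mem_iUnion, edgeSet_top, Set.mem_compl_iff]
    constructor
    · rintro (⟨j, hj⟩ | he)
      · rw [edgeSet_waleckiCycle j.2] at hj
        exact hj.2
      · rw [edgeSet_waleckiMatching] at he
        exact he.2
    · intro he
      have := waleckiLabel_le e
      by_cases hl : waleckiLabel m e < m / 2
      · exact Or.inl ⟨⟨_, hl⟩, by rw [edgeSet_waleckiCycle hl]; exact ⟨rfl, he⟩⟩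
      · refine Or.inr ?_
        rw [edgeSet_waleckiMatching]
        exact ⟨show waleckiLabel m e = m / 2 by omega, he⟩

theorem exists_isHamiltonianDecomposition_fin (m : ℕ) [NeZero m] :
    ∃ (c : Fin (m / 2) → Σ a : Fin (m + 1), (⊤ : SimpleGraph (Fin (m + 1))).Walk a a)
      (F : (⊤ : SimpleGraph (Fin (m + 1))).Subgraph),
      IsHamiltonianDecomposition c F.edgeSet ∧ (Even m → F.edgeSet = ∅) ∧
        (Odd m → F.IsPerfectMatching) := by
  let φ : (⊤ : SimpleGraph (Option (ZMod m))) ≃g (⊤ : SimpleGraph (Fin (m + 1))) :=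
    Iso.completeGraph (Fintype.equivFinOfCardEq (by simp))
  refine ⟨fun j => ⟨φ none, (waleckiCycle m (j : ℕ)).map φ.toHom⟩,
    (waleckiMatching m).map φ.toHom, ?_, fun hm => ?_,
    fun hm => (waleckiMatching_isPerfectMatching hm).map_iso φ⟩
  · rw [Subgraph.edgeSet_map]
    exact isHamiltonianDecomposition_walecki.map φ
  · rw [Subgraph.edgeSet_map, edgeSet_waleckiMatching_eq_empty hm, Set.image_empty]

end Walecki

/-- Walecki construction.
For every `N`, the edge set of the complete graph `K_N` on `N` vertices can be
partitioned into `(N−1)/2` Hamiltonian cycles when `N` is odd, and into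
`(N−2)/2` Hamiltonian cycles together with one perfect matching when `N` is
even. -/
theorem walecki_decomposition (N : ℕ) :
    (Odd N →
      ∃ c : Fin ((N - 1) / 2) → Σ a : Fin N, (⊤ : SimpleGraph (Fin N)).Walk a a,
        (∀ i, (c i).2.IsHamiltonianCycle) ∧
        (Set.univ : Set (Fin ((N - 1) / 2))).PairwiseDisjoint
          (fun i => {e | e ∈ (c i).2.edges}) ∧
        (⋃ i, {e | e ∈ (c i).2.edges}) = (⊤ : SimpleGraph (Fin N)).edgeSet) ∧
    (Even N →
      ∃ (c : Fin ((N - 2) / 2) → Σ a : Fin N, (⊤ : SimpleGraph (Fin N)).Walk a a)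
        (F : (⊤ : SimpleGraph (Fin N)).Subgraph),
        (∀ i, (c i).2.IsHamiltonianCycle) ∧
        F.IsPerfectMatching ∧
        (Set.univ : Set (Fin ((N - 2) / 2))).PairwiseDisjoint
          (fun i => {e | e ∈ (c i).2.edges}) ∧
        (∀ i, Disjoint {e | e ∈ (c i).2.edges} F.edgeSet) ∧
        ((⋃ i, {e | e ∈ (c i).2.edges}) ∪ F.edgeSet = (⊤ : SimpleGraph (Fin N)).edgeSet)) := by
  obtain hN | ⟨m, rfl, hm0⟩ : N ≤ 1 ∨ ∃ m, N = m + 1 ∧ m ≠ 0 :=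
    (le_or_gt N 1).imp_right fun h => ⟨N - 1, by omega, by omega⟩
  · have := Fin.subsingleton_iff_le_one.mpr hN
    rw [show (N - 1) / 2 = 0 by omega, show (N - 2) / 2 = 0 by omega,
      Subsingleton.elim (⊤ : SimpleGraph (Fin N)) ⊥, SimpleGraph.edgeSet_bot]
    refine ⟨fun _ => ⟨Fin.elim0, fun i => i.elim0, fun i => i.elim0, by simp⟩, fun hN => ?_⟩
    obtain rfl : N = 0 := by obtain ⟨k, hk⟩ := hN; omega
    exact ⟨Fin.elim0, ⊥, fun i => i.elim0,
      SimpleGraph.Subgraph.isPerfectMatching_iff.mpr fun v => v.elim0,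
      fun i => i.elim0, fun i => i.elim0, by simp⟩
  have : NeZero m := ⟨hm0⟩
  obtain ⟨c, F, hc, hF_even, hF_odd⟩ := Walecki.exists_isHamiltonianDecomposition_fin m
  refine ⟨fun hN => ?_, fun hN => ?_⟩
  · have hm : Even m := by simpa [Nat.odd_add_one] using hN
    rw [show (m + 1 - 1) / 2 = m / 2 by omega]
    have hunion := hc.iUnion_union
    rw [hF_even hm, Set.union_empty] at hunion
    exact ⟨c, hc.isHamiltonianCycle, hc.pairwiseDisjoint, hunion⟩
  · have hm : Odd m := by simpa [Nat.even_add_one] using hN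
    rw [show (m + 1 - 2) / 2 = m / 2 by obtain ⟨k, rfl⟩ := hm; omega]
    exact ⟨c, F, hc.isHamiltonianCycle, hF_odd hm, hc.pairwiseDisjoint, hc.disjoint,
      hc.iUnion_union⟩
end
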